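/- Let $s\in\mathbb{R}$, $\tau\ge 0$, $0<p,q\le\infty$ with either $\tau>1/p$, or $\tau=1/p$ and $q=\infty$. Then at the level of sequence spaces: $\|t\mid\tilde b^{s,\tau}_{p,q}(\tilde Q_0)\|\sim\sup_{j\ge0}2^{j(s+d(\tau-1/p)+d/2)}\sup_{i,m}|t_{i,j,m}|$, i.e. $\tilde b^{s,\tau}_{p,q}(\tilde Q_0)=\tilde b^{s+d(\tau-1/p)}_{\infty,\infty}(\tilde Q_0)$ with equivalent norms, for sequences supported in cubes inside a fixed dyadic cube $\tilde Q_0$. -/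

import Mathlib

/-!
For a dyadic cube `P` of level `jP` and a level `j ≥ jP`, `P` contains `2^{(j-jP)d}` cubes of
level `j`, so the `ℓ^p`-sum over them is at most `2^{(j-jP)d/p}` times their supremum. After
weighting by `|P|^{-τ}`, the level-`j` contribution to the term of `P` is therefore at most
`2^{-(j-jP)d(τ-1/p)}` times the `b̃_{∞,∞}` norm, and these geometric factors are `ℓ^q`-summable
with a bound independent of `P` (for `q = ∞` they need only be bounded, which allows `τ = 1/p`).
Conversely, taking `P = Q_{j,m}` itself isolates the single coefficient `t_{i,j,m}`.
-/

open MeasureTheory ENNReal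

noncomputable section

attribute [local instance] Classical.propDecidable

/-- The dyadic cube `Q_{j,k} = 2^{-j}([0,1)^d + k)` in `ℝ^d`. -/
def dyadicCube (d : ℕ) (j : ℤ) (k : Fin d → ℤ) : Set (Fin d → ℝ) :=
  {x | ∀ i, (2:ℝ) ^ (-j) * (k i) ≤ x i ∧ x i < (2:ℝ) ^ (-j) * (k i + 1)}

/-- The `ℓ_p`-sum `(∑_{m : Q_{j,m} ⊆ Q_{jP,k}} |u m|^p)^{1/p}` (sup for `p = ∞`). -/
def cubeLpNorm (d : ℕ) (p : ℝ≥0∞) (jP : ℤ) (k : Fin d → ℤ) (j : ℕ)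
    (u : (Fin d → ℤ) → ℂ) : ℝ≥0∞ :=
  if p = ∞ then
    ⨆ m ∈ {m : Fin d → ℤ | dyadicCube d (j : ℤ) m ⊆ dyadicCube d jP k}, (‖u m‖₊ : ℝ≥0∞)
  else
    (∑' m : Fin d → ℤ,
        if dyadicCube d (j : ℤ) m ⊆ dyadicCube d jP k then (‖u m‖₊ : ℝ≥0∞) ^ p.toReal
        else 0) ^ (1 / p.toReal)

/-- The sequence space quasi-norm `‖t ∣ b̃^{s,τ}_{p,q}(Q_{J0,K0})‖`:
`sup_{P ⊆ Q_{J0,K0}} |P|^{-τ} (∑_{j ≥ max{j_P,0}} 2^{j(s+d/2-d/p)q}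
   ∑_i [∑_{m : Q_{j,m} ⊆ P} |t_{i,j,m}|^p]^{q/p})^{1/q}`. -/
def seqNorm (d : ℕ) (s τ : ℝ) (p q : ℝ≥0∞) (J0 : ℤ) (K0 : Fin d → ℤ)
    (t : Fin (2 ^ d - 1) → ℕ → (Fin d → ℤ) → ℂ) : ℝ≥0∞ :=
  ⨆ (jP : ℤ) (k : Fin d → ℤ) (_ : dyadicCube d jP k ⊆ dyadicCube d J0 K0),
    (2 : ℝ≥0∞) ^ ((jP : ℝ) * d * τ) *
      (if q = ∞ then
        ⨆ (j : ℕ) (_ : jP ≤ (j : ℤ)) (i : Fin (2 ^ d - 1)),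
          (2 : ℝ≥0∞) ^ ((j : ℝ) * (s + d / 2 - d / p.toReal)) * cubeLpNorm d p jP k j (t i j)
      else
        (∑' j : ℕ,
            if jP ≤ (j : ℤ) then
              ∑ i : Fin (2 ^ d - 1),
                ((2 : ℝ≥0∞) ^ ((j : ℝ) * (s + d / 2 - d / p.toReal)) *
                    cubeLpNorm d p jP k j (t i j)) ^ q.toReal
            else 0) ^ (1 / q.toReal))

/-- `t` is supported in cubes contained in `Q_{J0,K0}`. -/
def SupportedIn (d : ℕ) (J0 : ℤ) (K0 : Fin d → ℤ)
    (t : Fin (2 ^ d - 1) → ℕ → (Fin d → ℤ) → ℂ) : Prop :=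
  ∀ i (j : ℕ) m, ¬ dyadicCube d (j : ℤ) m ⊆ dyadicCube d J0 K0 → t i j m = 0

lemma mem_Ico_of_dyadicCube_subset {d : ℕ} {jP : ℤ} {n : ℕ} {k m : Fin d → ℤ}
    (h : dyadicCube d (jP + n) m ⊆ dyadicCube d jP k) (i : Fin d) :
    m i ∈ Finset.Ico (k i * 2 ^ n) ((k i + 1) * 2 ^ n) := by
  have hpos : (0 : ℝ) < 2 ^ (-(jP + n)) := by positivity
  have corner : (fun i => (2 : ℝ) ^ (-(jP + n)) * m i) ∈ dyadicCube d (jP + n) m :=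
    fun i => ⟨le_rfl, mul_lt_mul_of_pos_left (by linarith) hpos⟩
  have hscale : (2 : ℝ) ^ (-jP) = 2 ^ (-(jP + n)) * 2 ^ n := by
    rw [← zpow_natCast, ← zpow_add₀ two_ne_zero]; ring_nf
  obtain ⟨hlow, hupp⟩ := h corner i
  rw [hscale, mul_assoc] at hlow hupp
  have hlow' := le_of_mul_le_mul_left hlow hpos
  have hupp' := lt_of_mul_lt_mul_left hupp hpos.le
  exact Finset.mem_Ico.2 ⟨by exact_mod_cast (by linarith : (k i : ℝ) * 2 ^ n ≤ m i),
    by exact_mod_cast (by linarith : (m i : ℝ) < (k i + 1) * 2 ^ n)⟩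

lemma tsum_ite_le_card_mul {α : Type*} {P : α → Prop} [DecidablePred P] (F : Finset α)
    (hPF : ∀ a, P a → a ∈ F) {f : α → ℝ≥0∞} {B : ℝ≥0∞} (hf : ∀ a, f a ≤ B) :
    ∑' a, (if P a then f a else 0) ≤ F.card * B := by
  rw [tsum_eq_sum (s := F) fun a ha => if_neg fun hPa => ha (hPF a hPa), ← nsmul_eq_mul]
  refine Finset.sum_le_card_nsmul _ _ _ fun a _ => ?_
  split_ifs
  exacts [hf a, zero_le]

lemma cubeLpNorm_le {d : ℕ} {p : ℝ≥0∞} (hp : p ≠ 0) {jP : ℤ} {j : ℕ} (hj : jP ≤ j)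
    (k : Fin d → ℤ) (u : (Fin d → ℤ) → ℂ) {B : ℝ≥0∞} (hB : ∀ m, (‖u m‖₊ : ℝ≥0∞) ≤ B) :
    cubeLpNorm d p jP k j u ≤ 2 ^ (((j : ℝ) - jP) * d * (p⁻¹).toReal) * B := by
  by_cases hp_top : p = ∞
  · simpa [cubeLpNorm, hp_top] using iSup₂_le fun m _ => hB m
  obtain ⟨n, hn⟩ := Int.le.dest hj
  have hjn : (j : ℝ) - jP = n := by
    have := congrArg (fun z : ℤ => (z : ℝ)) hn; push_cast at this; linarith
  have hpr : 0 < p.toReal := ENNReal.toReal_pos hp hp_top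
  let F := Fintype.piFinset fun i => Finset.Ico (k i * 2 ^ n) ((k i + 1) * 2 ^ n)
  have hF : (F.card : ℝ≥0∞) = 2 ^ ((n * d : ℕ) : ℝ) := by
    have hIco : ∀ i, (Finset.Ico (k i * 2 ^ n) ((k i + 1) * 2 ^ n)).card = 2 ^ n := fun i => by
      rw [Int.card_Ico, show (k i + 1) * 2 ^ n - k i * 2 ^ n = ((2 ^ n : ℕ) : ℤ) by push_cast; ring,
        Int.toNat_natCast]
    rw [Fintype.card_piFinset, Finset.prod_congr rfl fun i _ => hIco i, Finset.prod_const,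
      Finset.card_univ, Fintype.card_fin, ← pow_mul, ENNReal.rpow_natCast]
    push_cast; rfl
  have hsum : ∑' m, (if dyadicCube d j m ⊆ dyadicCube d jP k then (‖u m‖₊ : ℝ≥0∞) ^ p.toReal
      else 0) ≤ F.card * B ^ p.toReal :=
    tsum_ite_le_card_mul F (fun m hm => Fintype.mem_piFinset.2 fun i =>
      mem_Ico_of_dyadicCube_subset (by rwa [hn]) i) fun m => ENNReal.rpow_le_rpow (hB m) hpr.le
  calc cubeLpNorm d p jP k j u ≤ (F.card * B ^ p.toReal) ^ (1 / p.toReal) := by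
        rw [cubeLpNorm, if_neg hp_top]; exact ENNReal.rpow_le_rpow hsum (by positivity)
    _ = 2 ^ (((j : ℝ) - jP) * d * (p⁻¹).toReal) * B := by
        rw [ENNReal.mul_rpow_of_nonneg _ _ (by positivity), hF, ← ENNReal.rpow_mul,
          ← ENNReal.rpow_mul, mul_one_div_cancel hpr.ne', ENNReal.rpow_one, hjn,
          ENNReal.toReal_inv]
        push_cast; ring_nf

lemma le_cubeLpNorm {d : ℕ} {p : ℝ≥0∞} (hp : p ≠ 0) {jP : ℤ} {j : ℕ} {k m : Fin d → ℤ}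
    (u : (Fin d → ℤ) → ℂ) (hm : dyadicCube d j m ⊆ dyadicCube d jP k) :
    (‖u m‖₊ : ℝ≥0∞) ≤ cubeLpNorm d p jP k j u := by
  by_cases hp_top : p = ∞
  · rw [cubeLpNorm, if_pos hp_top]
    exact le_iSup₂_of_le (f := fun m (_ : m ∈ {m | dyadicCube d j m ⊆ dyadicCube d jP k}) =>
      (‖u m‖₊ : ℝ≥0∞)) m hm le_rfl
  have hpr : 0 < p.toReal := ENNReal.toReal_pos hp hp_top
  rw [cubeLpNorm, if_neg hp_top, one_div, ENNReal.le_rpow_inv_iff hpr]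
  refine le_trans ?_ (ENNReal.le_tsum m)
  rw [if_pos hm]

def levelNorm {ι : Type*} [Fintype ι] (q : ℝ≥0∞) (jP : ℤ) (a : ℕ → ι → ℝ≥0∞) : ℝ≥0∞ :=
  if q = ∞ then ⨆ (j : ℕ) (_ : jP ≤ (j : ℤ)) (i : ι), a j i
  else (∑' j : ℕ, if jP ≤ (j : ℤ) then ∑ i, a j i ^ q.toReal else 0) ^ (1 / q.toReal)

lemma seqNorm_eq_iSup_levelNorm (d : ℕ) (s τ : ℝ) (p q : ℝ≥0∞) (J0 : ℤ) (K0 : Fin d → ℤ)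
    (t : Fin (2 ^ d - 1) → ℕ → (Fin d → ℤ) → ℂ) :
    seqNorm d s τ p q J0 K0 t =
      ⨆ (jP : ℤ) (k : Fin d → ℤ) (_ : dyadicCube d jP k ⊆ dyadicCube d J0 K0),
        2 ^ ((jP : ℝ) * d * τ) * levelNorm q jP fun j i =>
          2 ^ ((j : ℝ) * (s + d / 2 - d / p.toReal)) * cubeLpNorm d p jP k j (t i j) :=
  rfl

def GeometricallyBounded {ι : Type*} (δ : ℝ) (jP : ℤ) (M : ℝ≥0∞) (a : ℕ → ι → ℝ≥0∞) : Prop :=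
  ∀ j : ℕ, jP ≤ j → ∀ i, a j i ≤ 2 ^ (-(((j : ℝ) - jP) * δ)) * M

section levelNorm

variable {ι : Type*} [Fintype ι] {q : ℝ≥0∞} {jP : ℤ} {a : ℕ → ι → ℝ≥0∞}

lemma le_levelNorm (hq : q ≠ 0) {j : ℕ} (hj : jP ≤ j) (i : ι) : a j i ≤ levelNorm q jP a := by
  by_cases hq_top : q = ∞
  · rw [levelNorm, if_pos hq_top]
    exact le_iSup_of_le j <| le_iSup_of_le hj <| le_iSup_of_le i le_rfl
  have hqr : 0 < q.toReal := ENNReal.toReal_pos hq hq_top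
  rw [levelNorm, if_neg hq_top, one_div, ENNReal.le_rpow_inv_iff hqr]
  refine le_trans ?_ (ENNReal.le_tsum j)
  rw [if_pos hj]
  exact Finset.single_le_sum (f := fun i => a j i ^ q.toReal) (fun _ _ => zero_le)
    (Finset.mem_univ i)

lemma mul_levelNorm (hq : q ≠ 0) (c : ℝ≥0∞) :
    c * levelNorm q jP a = levelNorm q jP fun j i => c * a j i := by
  by_cases hq_top : q = ∞
  · simp only [levelNorm, if_pos hq_top, ENNReal.mul_iSup]
  have hqr : 0 < q.toReal := ENNReal.toReal_pos hq hq_top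
  have hc : c = (c ^ q.toReal) ^ (1 / q.toReal) := by
    rw [← ENNReal.rpow_mul, mul_one_div_cancel hqr.ne', ENNReal.rpow_one]
  rw [levelNorm, levelNorm, if_neg hq_top, if_neg hq_top, hc,
    ← ENNReal.mul_rpow_of_nonneg _ _ (by positivity), ← ENNReal.tsum_mul_left, ← hc]
  congr 1
  refine tsum_congr fun j => ?_
  split_ifs
  · simp only [Finset.mul_sum, ENNReal.mul_rpow_of_nonneg _ _ hqr.le]
  · exact mul_zero _

lemma levelNorm_top_le {δ : ℝ} (hδ : 0 ≤ δ) {M : ℝ≥0∞} (ha : GeometricallyBounded δ jP M a) :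
    levelNorm ∞ jP a ≤ M := by
  rw [levelNorm, if_pos rfl]
  refine iSup_le fun j => iSup_le fun hj => iSup_le fun i => (ha j hj i).trans ?_
  refine mul_le_of_le_one_left zero_le
    ((ENNReal.rpow_le_rpow_of_exponent_le one_le_two ?_).trans_eq ENNReal.rpow_zero)
  have : (jP : ℝ) ≤ j := by exact_mod_cast hj
  nlinarith

lemma tsum_ite_two_rpow_le (jP : ℤ) {c : ℝ} (hc : 0 < c) :
    ∑' j : ℕ, (if jP ≤ (j : ℤ) then (2 : ℝ≥0∞) ^ (-(((j : ℝ) - jP) * c)) else 0)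
      ≤ (1 - 2 ^ (-c))⁻¹ := by
  set j0 := jP.toNat
  have hsupp : Function.support (fun j : ℕ =>
      if jP ≤ (j : ℤ) then (2 : ℝ≥0∞) ^ (-(((j : ℝ) - jP) * c)) else 0) ⊆
      Set.range (· + j0) := fun j hj =>
    ⟨j - j0, Nat.sub_add_cancel (Int.toNat_le.2 (by_contra fun h => hj (if_neg h)))⟩
  rw [← (add_left_injective j0).tsum_eq hsupp, ← ENNReal.tsum_geometric]
  refine ENNReal.tsum_le_tsum fun n => ?_
  split_ifs
  · rw [← ENNReal.rpow_natCast, ← ENNReal.rpow_mul]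
    refine ENNReal.rpow_le_rpow_of_exponent_le one_le_two ?_
    have : (jP : ℝ) ≤ j0 := by exact_mod_cast Int.self_le_toNat jP
    push_cast; nlinarith
  · exact zero_le

lemma levelNorm_le_of_le_geometric (hq : q ≠ 0) (hq_top : q ≠ ∞) {δ : ℝ} (hδ : 0 < δ)
    {M : ℝ≥0∞} (ha : GeometricallyBounded δ jP M a) :
    levelNorm q jP a ≤ (Fintype.card ι * (1 - 2 ^ (-(δ * q.toReal)))⁻¹) ^ (1 / q.toReal) * M := by
  have hqr : 0 < q.toReal := ENNReal.toReal_pos hq hq_top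
  have hterm : ∀ j : ℕ, (if jP ≤ (j : ℤ) then ∑ i, a j i ^ q.toReal else 0) ≤
      Fintype.card ι * M ^ q.toReal *
        if jP ≤ (j : ℤ) then (2 : ℝ≥0∞) ^ (-(((j : ℝ) - jP) * (δ * q.toReal))) else 0 := by
    intro j
    split_ifs with hj
    · calc ∑ i, a j i ^ q.toReal
          ≤ Fintype.card ι • ((2 : ℝ≥0∞) ^ (-(((j : ℝ) - jP) * δ)) * M) ^ q.toReal :=
            Finset.sum_le_card_nsmul _ _ _ fun i _ => ENNReal.rpow_le_rpow (ha j hj i) hqr.le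
        _ = _ := by
            rw [nsmul_eq_mul, ENNReal.mul_rpow_of_nonneg _ _ hqr.le, ← ENNReal.rpow_mul]
            ring_nf
    · simp
  calc levelNorm q jP a
      ≤ (Fintype.card ι * (1 - 2 ^ (-(δ * q.toReal)))⁻¹ * M ^ q.toReal) ^ (1 / q.toReal) := by
        rw [levelNorm, if_neg hq_top]
        refine ENNReal.rpow_le_rpow ?_ (by positivity)
        calc ∑' j : ℕ, (if jP ≤ (j : ℤ) then ∑ i, a j i ^ q.toReal else 0)
            ≤ ∑' j : ℕ, Fintype.card ι * M ^ q.toReal *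
                if jP ≤ (j : ℤ) then (2 : ℝ≥0∞) ^ (-(((j : ℝ) - jP) * (δ * q.toReal))) else 0 :=
              ENNReal.tsum_le_tsum hterm
          _ ≤ Fintype.card ι * M ^ q.toReal * (1 - 2 ^ (-(δ * q.toReal)))⁻¹ := by
              rw [ENNReal.tsum_mul_left]
              exact mul_le_mul_right (tsum_ite_two_rpow_le jP (mul_pos hδ hqr)) _
          _ = _ := mul_right_comm _ _ _
    _ = _ := by
        rw [ENNReal.mul_rpow_of_nonneg _ _ (by positivity), ← ENNReal.rpow_mul,
          mul_one_div_cancel hqr.ne', ENNReal.rpow_one]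

end levelNorm

lemma exists_levelNorm_le_of_geometric {ι : Type*} [Fintype ι] [Nonempty ι] {q : ℝ≥0∞}
    (hq : q ≠ 0) {δ : ℝ} (hδ : 0 < δ ∨ 0 ≤ δ ∧ q = ∞) :
    ∃ C : ℝ≥0∞, 0 < C ∧ C < ∞ ∧ ∀ (jP : ℤ) (a : ℕ → ι → ℝ≥0∞) (M : ℝ≥0∞),
      GeometricallyBounded δ jP M a → levelNorm q jP a ≤ C * M := by
  by_cases hq_top : q = ∞
  · subst hq_top
    have hδ0 : 0 ≤ δ := hδ.elim le_of_lt And.left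
    exact ⟨1, one_pos, one_lt_top, fun jP a M ha => (one_mul M).symm ▸ levelNorm_top_le hδ0 ha⟩
  have hδ0 : 0 < δ := hδ.resolve_right fun h => hq_top h.2
  have hqr : 0 < q.toReal := ENNReal.toReal_pos hq hq_top
  have hratio : (2 : ℝ≥0∞) ^ (-(δ * q.toReal)) < 1 := by
    simpa using ENNReal.rpow_lt_rpow_of_exponent_lt (x := 2) one_lt_two ofNat_ne_top
      (neg_neg_of_pos (mul_pos hδ0 hqr))
  have hbase_ne_zero : (Fintype.card ι * (1 - 2 ^ (-(δ * q.toReal)))⁻¹ : ℝ≥0∞) ≠ 0 :=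
    mul_ne_zero (Nat.cast_ne_zero.2 Fintype.card_ne_zero)
      (ENNReal.inv_ne_zero.2 (ne_top_of_le_ne_top one_ne_top tsub_le_self))
  have hbase_ne_top : (Fintype.card ι * (1 - 2 ^ (-(δ * q.toReal)))⁻¹ : ℝ≥0∞) ≠ ∞ :=
    mul_ne_top (natCast_ne_top _) (ENNReal.inv_ne_top.2 (tsub_pos_of_lt hratio).ne')
  exact ⟨_, ENNReal.rpow_pos (pos_iff_ne_zero.2 hbase_ne_zero) hbase_ne_top,
    ENNReal.rpow_lt_top_of_nonneg (by positivity) hbase_ne_top,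
    fun jP a M ha => levelNorm_le_of_le_geometric hq hq_top hδ0 ha⟩

lemma scaled_cubeLpNorm_le {d : ℕ} {s τ : ℝ} {p : ℝ≥0∞} (hp : p ≠ 0) {jP : ℤ} {j : ℕ}
    (hj : jP ≤ j) (k : Fin d → ℤ) (u : (Fin d → ℤ) → ℂ) {M : ℝ≥0∞}
    (hM : ∀ m, 2 ^ ((j : ℝ) * (s + d * (τ - (p⁻¹).toReal) + d / 2)) * (‖u m‖₊ : ℝ≥0∞) ≤ M) :
    2 ^ ((jP : ℝ) * d * τ) * (2 ^ ((j : ℝ) * (s + d / 2 - d / p.toReal)) * cubeLpNorm d p jP k j u)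
      ≤ 2 ^ (-(((j : ℝ) - jP) * (d * (τ - (p⁻¹).toReal)))) * M := by
  have two_rpow_add (x y : ℝ) : (2 : ℝ≥0∞) ^ (x + y) = 2 ^ x * 2 ^ y :=
    ENNReal.rpow_add x y two_ne_zero ofNat_ne_top
  set σ := s + d * (τ - (p⁻¹).toReal) + d / 2
  have hB : ∀ m, (‖u m‖₊ : ℝ≥0∞) ≤ 2 ^ (-((j : ℝ) * σ)) * M := fun m => by
    calc (‖u m‖₊ : ℝ≥0∞) = 2 ^ (-((j : ℝ) * σ)) * (2 ^ ((j : ℝ) * σ) * ‖u m‖₊) := by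
          rw [← mul_assoc, ← two_rpow_add, neg_add_cancel, ENNReal.rpow_zero, one_mul]
      _ ≤ _ := by gcongr; exact hM m
  calc 2 ^ ((jP : ℝ) * d * τ) * (2 ^ ((j : ℝ) * (s + d / 2 - d / p.toReal)) *
        cubeLpNorm d p jP k j u)
      ≤ 2 ^ ((jP : ℝ) * d * τ) * (2 ^ ((j : ℝ) * (s + d / 2 - d / p.toReal)) *
        (2 ^ (((j : ℝ) - jP) * d * (p⁻¹).toReal) * (2 ^ (-((j : ℝ) * σ)) * M))) := by
        gcongr; exact cubeLpNorm_le hp hj k u hB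
    _ = 2 ^ ((jP : ℝ) * d * τ + (j : ℝ) * (s + d / 2 - d / p.toReal) +
          ((j : ℝ) - jP) * d * (p⁻¹).toReal + -((j : ℝ) * σ)) * M := by
        simp only [two_rpow_add]; ring
    _ = 2 ^ (-(((j : ℝ) - jP) * (d * (τ - (p⁻¹).toReal)))) * M := by
        congr 2; simp only [σ, ENNReal.toReal_inv]; ring

/-- The norm of `b̃^{σ}_{∞,∞}`. -/
def seqNormInfty (d : ℕ) (σ : ℝ) (t : Fin (2 ^ d - 1) → ℕ → (Fin d → ℤ) → ℂ) : ℝ≥0∞ :=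
  ⨆ (j : ℕ) (i : Fin (2 ^ d - 1)) (m : Fin d → ℤ),
    2 ^ ((j : ℝ) * (σ + d / 2)) * (‖t i j m‖₊ : ℝ≥0∞)

section seqNorm

variable {d : ℕ} {s τ : ℝ} {p q : ℝ≥0∞} {J0 : ℤ} {K0 : Fin d → ℤ}

lemma seqNorm_le_mul_seqNormInfty (hp : p ≠ 0) (hq : q ≠ 0) {C : ℝ≥0∞}
    (hC : ∀ (jP : ℤ) (a : ℕ → Fin (2 ^ d - 1) → ℝ≥0∞) (M : ℝ≥0∞),
      GeometricallyBounded (d * (τ - (p⁻¹).toReal)) jP M a → levelNorm q jP a ≤ C * M)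
    (t : Fin (2 ^ d - 1) → ℕ → (Fin d → ℤ) → ℂ) :
    seqNorm d s τ p q J0 K0 t ≤ C * seqNormInfty d (s + d * (τ - (p⁻¹).toReal)) t := by
  rw [seqNorm_eq_iSup_levelNorm]
  refine iSup_le fun jP => iSup_le fun k => iSup_le fun _ => ?_
  rw [mul_levelNorm hq]
  exact hC jP _ _ fun j hj i => scaled_cubeLpNorm_le hp hj k (t i j) fun m =>
    le_iSup_of_le j <| le_iSup_of_le i <| le_iSup_of_le m le_rfl

lemma seqNormInfty_le_seqNorm (hp : p ≠ 0) (hq : q ≠ 0)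
    {t : Fin (2 ^ d - 1) → ℕ → (Fin d → ℤ) → ℂ} (ht : SupportedIn d J0 K0 t) :
    seqNormInfty d (s + d * (τ - (p⁻¹).toReal)) t ≤ seqNorm d s τ p q J0 K0 t := by
  refine iSup_le fun j => iSup_le fun i => iSup_le fun m => ?_
  by_cases hm : dyadicCube d j m ⊆ dyadicCube d J0 K0
  swap
  · simp [ht i j m hm]
  calc 2 ^ ((j : ℝ) * (s + d * (τ - (p⁻¹).toReal) + d / 2)) * (‖t i j m‖₊ : ℝ≥0∞)
      = 2 ^ (((j : ℤ) : ℝ) * d * τ) *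
          (2 ^ ((j : ℝ) * (s + d / 2 - d / p.toReal)) * ‖t i j m‖₊) := by
        rw [← mul_assoc, ← ENNReal.rpow_add _ _ two_ne_zero ofNat_ne_top, ENNReal.toReal_inv]
        push_cast; ring_nf
    _ ≤ 2 ^ (((j : ℤ) : ℝ) * d * τ) * levelNorm q j fun j' i' =>
          2 ^ ((j' : ℝ) * (s + d / 2 - d / p.toReal)) * cubeLpNorm d p j m j' (t i' j') := by
        gcongr
        exact le_trans (by gcongr; exact le_cubeLpNorm hp (t i j) subset_rfl)
          (le_levelNorm hq le_rfl i)
    _ ≤ seqNorm d s τ p q J0 K0 t := by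
        rw [seqNorm_eq_iSup_levelNorm]
        exact le_iSup_of_le (j : ℤ) <| le_iSup_of_le m <| le_iSup_of_le hm le_rfl

end seqNorm

/-- Sequence-space version of the coincidence `A^{s,τ}_{p,q} = B^{s+d(τ-1/p)}_{∞,∞}`
for `τ > 1/p`, or `τ = 1/p` and `q = ∞`: for sequences supported in a fixed dyadic
cube `Q̃₀`, `‖t ∣ b̃^{s,τ}_{p,q}(Q̃₀)‖ ∼ sup_{j≥0} 2^{j(s+d(τ-1/p)+d/2)} sup_{i,m} |t_{i,j,m}|`. -/
theorem statement12 (d : ℕ) (hd : 1 ≤ d) (s τ : ℝ) (p q : ℝ≥0∞) (hp : 0 < p) (hq : 0 < q)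
    (h : (p⁻¹).toReal < τ ∨ (τ = (p⁻¹).toReal ∧ q = ∞)) (J0 : ℤ) (K0 : Fin d → ℤ) :
    ∃ C1 C2 : ℝ≥0∞, 0 < C1 ∧ C1 < ∞ ∧ 0 < C2 ∧ C2 < ∞ ∧
      ∀ t : Fin (2 ^ d - 1) → ℕ → (Fin d → ℤ) → ℂ, SupportedIn d J0 K0 t →
        (seqNorm d s τ p q J0 K0 t ≤
            C1 * ⨆ (j : ℕ) (i : Fin (2 ^ d - 1)) (m : Fin d → ℤ),
              (2 : ℝ≥0∞) ^ ((j : ℝ) * (s + d * (τ - (p⁻¹).toReal) + d / 2)) *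
                (‖t i j m‖₊ : ℝ≥0∞)) ∧
          (⨆ (j : ℕ) (i : Fin (2 ^ d - 1)) (m : Fin d → ℤ),
              (2 : ℝ≥0∞) ^ ((j : ℝ) * (s + d * (τ - (p⁻¹).toReal) + d / 2)) *
                (‖t i j m‖₊ : ℝ≥0∞))
            ≤ C2 * seqNorm d s τ p q J0 K0 t := by
  have : Nonempty (Fin (2 ^ d - 1)) :=
    ⟨⟨0, Nat.sub_pos_of_lt (Nat.one_lt_two_pow (by omega))⟩⟩
  have hδ : 0 < (d : ℝ) * (τ - (p⁻¹).toReal) ∨ 0 ≤ (d : ℝ) * (τ - (p⁻¹).toReal) ∧ q = ∞ := by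
    have hd' : (0 : ℝ) < d := by exact_mod_cast hd
    rcases h with hτ | ⟨rfl, hq_top⟩
    · exact Or.inl (mul_pos hd' (sub_pos.2 hτ))
    · exact Or.inr ⟨by simp, hq_top⟩
  obtain ⟨C, hC0, hC_top, hC⟩ :=
    exists_levelNorm_le_of_geometric (ι := Fin (2 ^ d - 1)) hq.ne' hδ
  refine ⟨C, 1, hC0, hC_top, one_pos, one_lt_top, fun t ht => ⟨?_, ?_⟩⟩
  · exact seqNorm_le_mul_seqNormInfty hp.ne' hq.ne' hC t
  · rw [one_mul]
    exact seqNormInfty_le_seqNorm hp.ne' hq.ne' ht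

end
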